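/- Let H be a graph and r ≥ 2 such that Hom_p(K_r, H) is nonempty. There is a graph homomorphism from the compatibility graph C_{Hom_p(K_r,H)} (for the free cyclic shift Z_r-action) to H; consequently χ(C_{Hom_p(K_r,H)}) ≤ χ(H). -/

import Mathlib

variable {V : Type*}

/-- The Hom poset `Hom_p(K_r, H)`: `r`-tuples of nonempty subsets of `V(H)` that are
pairwise completely joined in `H`, ordered componentwise by inclusion. -/
def HomK (r : ℕ) (H : SimpleGraph V) : Type _ :=
  {A : Fin r → Finset V // (∀ i, (A i).Nonempty) ∧
    ∀ i j : Fin r, i ≠ j → ∀ a ∈ A i, ∀ b ∈ A j, H.Adj a b}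

instance (r : ℕ) (H : SimpleGraph V) : PartialOrder (HomK r H) where
  le A B := ∀ i, A.1 i ⊆ B.1 i
  le_refl A i := subset_rfl
  le_trans A B C h h' i := (h i).trans (h' i)
  le_antisymm A B h h' := Subtype.ext (funext fun i => subset_antisymm (h i) (h' i))

/-- Cyclic shift by `i` on `Hom_p(K_r, H)`: the action of `ω^i ∈ Z_r`. -/
def HomK.shift {r : ℕ} [NeZero r] {H : SimpleGraph V} (i : Fin r) (A : HomK r H) :
    HomK r H :=
  ⟨fun j => A.1 (j + i), fun j => A.2.1 (j + i), by
    intro j k hjk a ha b hb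
    exact A.2.2 (j + i) (k + i) (fun h => hjk (by simpa using add_right_cancel h)) a ha b hb⟩

/-- The compatibility graph of the `Z_r`-poset `Hom_p(K_r, H)` (cyclic shift action):
`A ~ B` iff `A ≠ B` and `A` is comparable with some nontrivial cyclic shift of `B`. -/
def compatK (r : ℕ) [NeZero r] (H : SimpleGraph V) : SimpleGraph (HomK r H) where
  Adj A B := A ≠ B ∧ ∃ i : Fin r, i ≠ 0 ∧ (A ≤ HomK.shift i B ∨ HomK.shift i B ≤ A)
  symm := by
    have hshift : ∀ (i : Fin r) (A B : HomK r H), A ≤ B → HomK.shift i A ≤ HomK.shift i B :=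
      fun i A B h j => h (j + i)
    have hinv : ∀ (i : Fin r) (A : HomK r H), HomK.shift (-i) (HomK.shift i A) = A := by
      intro i A
      apply Subtype.ext
      funext j
      show A.1 (j + -i + i) = A.1 j
      simp
    constructor
    rintro A B ⟨hAB, i, hi, h⟩
    refine ⟨hAB.symm, -i, by simpa using hi, ?_⟩
    rcases h with h | h
    · right
      have := hshift (-i) _ _ h
      rwa [hinv] at this
    · left
      have := hshift (-i) _ _ h
      rwa [hinv] at this
  loopless := ⟨fun A h => h.1 rfl⟩

noncomputable instance (r : ℕ) (H : SimpleGraph V) [Fintype V] : Fintype (HomK r H) := by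
  classical exact Subtype.fintype _

/- The first coordinate of a nontrivial shift by `i` is coordinate `i ≠ 0`, and distinct
coordinates of a tuple in `Hom_p(K_r, H)` are completely joined in `H`; so a vertex of `A₀`
is adjacent to every vertex of `B₀` whenever `A` is comparable with a nontrivial shift of `B`,
and picking any vertex of the first coordinate is a homomorphism `C_{Hom_p(K_r, H)} → H`. -/

namespace HomK

variable {r : ℕ} [NeZero r] {H : SimpleGraph V}

theorem adj_of_compatK_adj {A B : HomK r H} (hAB : (compatK r H).Adj A B) {a b : V}
    (ha : a ∈ A.1 0) (hb : b ∈ B.1 0) : H.Adj a b := by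
  obtain ⟨-, i, hi, hle | hle⟩ := hAB
  · have ha' : a ∈ B.1 (0 + i) := hle 0 ha
    rw [zero_add] at ha'
    exact (B.2.2 0 i (Ne.symm hi) b hb a ha').symm
  · have hb' : b ∈ A.1 (-i) := hle (-i) (by simpa [shift] using hb)
    exact A.2.2 0 (-i) (by simpa [eq_comm] using hi) a ha b hb'

noncomputable def pick (A : HomK r H) : V :=
  (A.2.1 0).choose

theorem pick_mem (A : HomK r H) : A.pick ∈ A.1 0 :=
  (A.2.1 0).choose_spec

end HomK

noncomputable def compatKHom (r : ℕ) [NeZero r] (H : SimpleGraph V) : compatK r H →g H where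
  toFun := HomK.pick
  map_rel' hAB := HomK.adj_of_compatK_adj hAB (HomK.pick_mem _) (HomK.pick_mem _)

theorem compatK_hom_to_H_general
    (H : SimpleGraph V) (r : ℕ) [NeZero r] :
    Nonempty (compatK r H →g H) ∧
      (compatK r H).chromaticNumber ≤ H.chromaticNumber :=
  ⟨⟨compatKHom r H⟩, SimpleGraph.chromaticNumber_mono_of_hom (compatKHom r H)⟩

/-- For a graph `H` and `r ≥ 2` with `Hom_p(K_r, H)` nonempty, there
is a graph homomorphism from the compatibility graph `C_{Hom_p(K_r, H)}` (for the
cyclic shift `Z_r`-action) to `H`; consequently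
`χ(C_{Hom_p(K_r, H)}) ≤ χ(H)`. -/
theorem compatK_hom_to_H
    (H : SimpleGraph V) (r : ℕ) [NeZero r] (hr : 2 ≤ r) (hne : Nonempty (HomK r H)) :
    Nonempty (compatK r H →g H) ∧
      (compatK r H).chromaticNumber ≤ H.chromaticNumber :=
  compatK_hom_to_H_general H r
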